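/- arXiv:1503.03919 — 3 statements merged into one kernel-verified Lean document; each statement's English description precedes it below -/
import Mathlib

section
/- Let X be a Polish space and G a Polish group acting continuously on X. Suppose x ∈ X is such that for every open neighborhood V of the identity in G, the set V.x = {g.x : g ∈ V} is somewhere dense in the closure of the orbit G.x. Then the orbit G.x is comeager in the closure of G.x. -/
/-!
The orbit `G • x` is analytic, and analytic sets have the Baire property: for the image `A l` of
the cylinder of a finite sequence `l`, let `D l` be the closed set of points near which `A l` is
non-meagre; then `A l \ D l` and `D l \ ⋃ b, D (b :: l)` are meagre, and a point of `D []` outside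
the latter sets follows a branch `x` of the scheme, so it equals `f x`.

The orbit is not meagre in its closure: otherwise, by the Baire category theorem in `G`, some
`V • x` would lie in a translate of a closed nowhere dense set. Being non-meagre with the Baire
property, the orbit is comeagre in a nonempty open set `U` meeting it, hence in the dense open set
`⋃ g, g • U`, which countably many translates of `U` already cover.
-/

open Filter Topology Set MulAction TopologicalSpace PiNat MeasureTheory

open scoped Pointwise

section NonmeagrePoints

variable {α : Type*} [TopologicalSpace α]

theorem residualEq_set {s t : Set α} : s =ᵇ t ↔ IsMeagre (s \ t) ∧ IsMeagre (t \ s) := by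
  rw [eventuallyEq_set, IsMeagre, IsMeagre, ← inter_mem_iff]
  refine Iff.of_eq (congrArg (· ∈ residual α) ?_)
  ext z
  simp only [mem_inter_iff, mem_compl_iff, Set.mem_sdiff, mem_ofPred_eq]
  tauto

def nonmeagrePoints (s : Set α) : Set α :=
  {z | ∀ u ∈ 𝓝 z, ¬IsMeagre (u ∩ s)}

theorem isClosed_nonmeagrePoints (s : Set α) : IsClosed (nonmeagrePoints s) := by
  rw [← isOpen_compl_iff, isOpen_iff_mem_nhds]
  intro z hz
  simp only [nonmeagrePoints, mem_compl_iff, mem_ofPred_eq, not_forall, not_not] at hz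
  obtain ⟨u, hu, hmeagre⟩ := hz
  filter_upwards [eventually_mem_nhds_iff.2 hu] with w hw
  exact fun h => h u hw hmeagre

theorem nonmeagrePoints_subset_closure (s : Set α) : nonmeagrePoints s ⊆ closure s :=
  fun _ hz => mem_closure_iff_nhds.2 fun u hu => nonempty_of_not_isMeagre (hz u hu)

theorem isMeagre_diff_nonmeagrePoints [SecondCountableTopology α] (s : Set α) :
    IsMeagre (s \ nonmeagrePoints s) := by
  refine (isMeagre_biUnion ((countable_countableBasis α).mono
    (sep_subset _ fun b => IsMeagre (b ∩ s))) fun b hb => hb.2).mono ?_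
  rintro z ⟨hzs, hz⟩
  simp only [nonmeagrePoints, mem_ofPred_eq, not_forall, not_not] at hz
  obtain ⟨u, hu, hmeagre⟩ := hz
  obtain ⟨b, hb, hzb, hbu⟩ := (isBasis_countableBasis α).mem_nhds_iff.1 hu
  exact mem_biUnion ⟨hb, hmeagre.mono (inter_subset_inter_left _ hbu)⟩ ⟨hzb, hzs⟩

theorem isMeagre_nonmeagrePoints_diff_iUnion [SecondCountableTopology α] {ι : Type*}
    [Countable ι] {s : Set α} {t : ι → Set α} (hst : s ⊆ ⋃ i, t i) :
    IsMeagre (nonmeagrePoints s \ ⋃ i, nonmeagrePoints (t i)) := by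
  -- `P` has the Baire property, and it misses the open set `U` it agrees with: near a point of
  -- `U ∩ P`, the set `s` would be covered by the meagre sets `U \ P` and
  -- `t i \ nonmeagrePoints (t i)`.
  set P := nonmeagrePoints s \ ⋃ i, nonmeagrePoints (t i)
  have hP : BaireMeasurableSet P :=
    (isClosed_nonmeagrePoints s).isOpen_compl.baireMeasurableSet.of_compl.diff
      (.iUnion fun i => (isClosed_nonmeagrePoints (t i)).isOpen_compl.baireMeasurableSet.of_compl)
  obtain ⟨U, hU, hPU⟩ := hP.residualEq_isOpen
  obtain ⟨hPU, hUP⟩ := residualEq_set.1 hPU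
  have hUP_disj : Disjoint U P := by
    refine disjoint_left.2 fun z hzU hzP => hzP.1 U (hU.mem_nhds hzU) ?_
    refine (hUP.union (isMeagre_iUnion fun i => isMeagre_diff_nonmeagrePoints (t i))).mono ?_
    rintro y ⟨hyU, hys⟩
    obtain ⟨i, hyi⟩ := mem_iUnion.1 (hst hys)
    by_cases hy : y ∈ nonmeagrePoints (t i)
    · exact Or.inl ⟨hyU, fun hyP => hyP.2 (mem_iUnion.2 ⟨i, hy⟩)⟩
    · exact Or.inr (mem_iUnion.2 ⟨i, hyi, hy⟩)
  exact hUP_disj.symm.sdiff_eq_left ▸ hPU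

end NonmeagrePoints

section Scheme

variable {β : Type*}

theorem exists_forall_res_of_forall_exists_cons {p : List β → Prop} (h₀ : p [])
    (hstep : ∀ l, p l → ∃ b, p (b :: l)) : ∃ x : ℕ → β, ∀ n, p (res x n) := by
  choose c hc using hstep
  let L : ℕ → {l // p l} := fun n =>
    Nat.rec ⟨[], h₀⟩ (fun _ l => ⟨c l.1 l.2 :: l.1, hc l.1 l.2⟩) n
  refine ⟨fun n => c (L n).1 (L n).2, fun n => ?_⟩
  have hres : res (fun n => c (L n).1 (L n).2) n = (L n).1 := by
    induction n with
    | zero => rfl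
    | succ n ih => rw [res_succ, ih]
  exact hres ▸ (L n).2

def listCylinder (l : List β) : Set (ℕ → β) :=
  {y | res y l.length = l}

theorem listCylinder_nil : listCylinder ([] : List β) = univ := by
  simp [listCylinder]

theorem listCylinder_res (x : ℕ → β) (n : ℕ) : listCylinder (res x n) = cylinder x n := by
  simp [listCylinder, cylinder_eq_res]

theorem listCylinder_subset_iUnion_cons (l : List β) :
    listCylinder l ⊆ ⋃ b, listCylinder (b :: l) := fun y hy =>
  mem_iUnion.2 ⟨y l.length, by simp_all [listCylinder]⟩

theorem eq_of_forall_mem_closure_image_cylinder [TopologicalSpace β] [DiscreteTopology β]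
    {α : Type*} [TopologicalSpace α] [T2Space α] {f : (ℕ → β) → α} (hf : Continuous f)
    {x : ℕ → β} {z : α} (hz : ∀ n, z ∈ closure (f '' cylinder x n)) : z = f x := by
  have hcluster : ClusterPt z (map f (𝓝 x)) := by
    rw [clusterPt_iff_forall_mem_closure]
    intro u hu
    obtain ⟨_, ⟨y, n, rfl⟩, hxy, hsub⟩ :=
      (isTopologicalBasis_cylinders fun _ : ℕ => β).mem_nhds_iff.1 hu
    rw [← mem_cylinder_iff_eq.1 hxy] at hsub
    exact closure_mono (image_subset_iff.2 hsub) (hz n)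
  exact eq_of_nhds_neBot (hcluster.mono (hf.tendsto x))

theorem baireMeasurableSet_range_of_continuous [Countable β] [TopologicalSpace β]
    [DiscreteTopology β] {α : Type*} [TopologicalSpace α] [T2Space α]
    [SecondCountableTopology α]
    {f : (ℕ → β) → α} (hf : Continuous f) : BaireMeasurableSet (range f) := by
  set D : List β → Set α := fun l => nonmeagrePoints (f '' listCylinder l)
  have hrange : range f = f '' listCylinder [] := by rw [listCylinder_nil, image_univ]
  have hrange_diff : IsMeagre (range f \ D []) := hrange ▸ isMeagre_diff_nonmeagrePoints _
  have hdiff_range : D [] \ range f ⊆ ⋃ l, (D l \ ⋃ b, D (b :: l)) := by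
    rintro z ⟨hz, hzf⟩
    by_contra hbranch
    simp only [mem_iUnion, not_exists] at hbranch
    obtain ⟨x, hx⟩ := exists_forall_res_of_forall_exists_cons (p := fun l => z ∈ D l) hz
      fun l hl => mem_iUnion.1 (not_not.1 fun h => hbranch l ⟨hl, h⟩)
    refine hzf ⟨x, (eq_of_forall_mem_closure_image_cylinder hf fun n => ?_).symm⟩
    rw [← listCylinder_res]
    exact nonmeagrePoints_subset_closure _ (hx n)
  have hdiff_range_meagre : IsMeagre (D [] \ range f) :=
    (isMeagre_iUnion fun l => isMeagre_nonmeagrePoints_diff_iUnion <| by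
      rw [← image_iUnion]; exact image_mono (listCylinder_subset_iUnion_cons l)).mono hdiff_range
  exact (isClosed_nonmeagrePoints _).isOpen_compl.baireMeasurableSet.of_compl.congr
    (residualEq_set.2 ⟨hdiff_range_meagre, hrange_diff⟩)

theorem MeasureTheory.AnalyticSet.baireMeasurableSet {α : Type*} [TopologicalSpace α] [T2Space α]
    [SecondCountableTopology α] {s : Set α} (hs : AnalyticSet s) : BaireMeasurableSet s := by
  rw [AnalyticSet] at hs
  rcases hs with rfl | ⟨f, hf, rfl⟩
  · exact isOpen_empty.baireMeasurableSet
  · exact baireMeasurableSet_range_of_continuous hf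

end Scheme

section Action

variable {G Y : Type*} [Group G] [TopologicalSpace Y] [MulAction G Y]

theorem IsNowhereDense.smul [ContinuousConstSMul G Y] {s : Set Y} (hs : IsNowhereDense s)
    (g : G) : IsNowhereDense (g • s) := by
  rw [IsNowhereDense, closure_smul, interior_smul, hs, smul_set_empty]

theorem IsMeagre.smul [ContinuousConstSMul G Y] {s : Set Y} (hs : IsMeagre s) (g : G) :
    IsMeagre (g • s) := by
  rw [← preimage_smul_inv]
  exact hs.preimage_of_isOpenMap (continuous_const_smul _) (isOpenMap_smul _)

theorem not_isMeagre_orbit [TopologicalSpace G] [ContinuousMul G] [BaireSpace G]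
    [ContinuousSMul G Y] {y : Y}
    (h : ∀ V : Set G, IsOpen V → (1 : G) ∈ V → ¬IsNowhereDense ((· • y) '' V)) :
    ¬IsMeagre (orbit G y) := by
  intro hO
  obtain ⟨S, hS, hSc, hOS⟩ := isMeagre_iff_countable_union_isNowhereDense.1 hO
  have hcover : ⋃ t : S, (· • y) ⁻¹' closure (t : Set Y) = univ :=
    eq_univ_of_forall fun g => by
      obtain ⟨t, ht, hgt⟩ := mem_sUnion.1 (hOS (mem_orbit y g))
      exact mem_iUnion.2 ⟨⟨t, ht⟩, subset_closure hgt⟩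
  have := hSc.to_subtype
  have hcont : Continuous fun g : G => g • y := continuous_id.smul continuous_const
  obtain ⟨⟨t, ht⟩, g₀, hg₀⟩ := nonempty_interior_of_iUnion_of_closed
    (fun t : S => isClosed_closure.preimage hcont) hcover
  refine h ((g₀ * ·) ⁻¹' interior ((· • y) ⁻¹' closure t))
    (isOpen_interior.preimage (continuous_const_mul g₀)) (by simpa using hg₀)
    (((hS t ht).closure.smul g₀⁻¹).mono ?_)
  rintro _ ⟨v, hv, rfl⟩
  have hv' : (g₀ * v) • y ∈ closure t := interior_subset (s := (· • y) ⁻¹' closure t) hv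
  exact ⟨(g₀ * v) • y, hv', by simp [smul_smul]⟩

theorem orbit_mem_residual [ContinuousConstSMul G Y] [SecondCountableTopology Y] {y : Y}
    (hdense : Dense (orbit G y)) (hbm : BaireMeasurableSet (orbit G y))
    (hnm : ¬IsMeagre (orbit G y)) : orbit G y ∈ residual Y := by
  obtain ⟨U, hU, hOU⟩ := hbm.residualEq_isOpen
  obtain ⟨hOU, hUO⟩ := residualEq_set.1 hOU
  obtain ⟨_, ⟨g₀, rfl⟩, hg₀⟩ : (orbit G y ∩ U).Nonempty :=
    nonempty_of_not_isMeagre fun h => hnm ((hOU.union h).mono (sdiff_union_inter _ U).superset)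
  set W := ⋃ g : G, g • U
  have hW : IsOpen W := isOpen_iUnion fun g => hU.smul g
  have hOW : orbit G y ⊆ W := by
    rintro _ ⟨g, rfl⟩
    exact mem_iUnion.2 ⟨g * g₀⁻¹, g₀ • y, hg₀, by simp [smul_smul]⟩
  obtain ⟨T, hT, hTW⟩ := isOpen_iUnion_countable (fun g : G => g • U) fun g => hU.smul g
  have hWO : W \ orbit G y ⊆ ⋃ g ∈ T, g • (U \ orbit G y) := by
    rintro z ⟨hzW, hzO⟩
    obtain ⟨g, hg, u, hu, rfl⟩ := mem_iUnion₂.1 (hTW ▸ hzW : z ∈ ⋃ g ∈ T, g • U)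
    exact mem_biUnion hg
      ⟨u, ⟨hu, fun huO => hzO (smul_orbit_subset g y (smul_mem_smul_set huO))⟩, rfl⟩
  have hWc : IsMeagre Wᶜ := by
    rw [IsMeagre, compl_compl]
    exact residual_of_dense_open hW (hdense.mono hOW)
  have hOc : IsMeagre (orbit G y)ᶜ :=
    (hWc.union ((isMeagre_biUnion hT fun g _ => hUO.smul g).mono hWO)).mono fun _ hz =>
      or_iff_not_imp_left.2 fun hzW => ⟨not_not.1 hzW, hz⟩
  rwa [IsMeagre, compl_compl] at hOc

end Action

section OrbitClosure

variable {G X : Type*} [Group G] [TopologicalSpace X] [MulAction G X]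

instance mulActionClosureOrbit [ContinuousConstSMul G X] {x : X} :
    MulAction G (closure (orbit G x)) where
  smul g z := ⟨g • (z : X), smul_closure_orbit_subset g x (smul_mem_smul_set z.2)⟩
  one_smul z := Subtype.ext (one_smul G (z : X))
  mul_smul g h z := Subtype.ext (mul_smul g h (z : X))

instance continuousSMulClosureOrbit [TopologicalSpace G] [ContinuousSMul G X] {x : X} :
    ContinuousSMul G (closure (orbit G x)) :=
  ⟨(continuous_fst.smul (continuous_subtype_val.comp continuous_snd)).subtype_mk _⟩

theorem preimage_val_image_smul [ContinuousConstSMul G X] (x : X) (V : Set G) :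
    (Subtype.val ⁻¹' ((· • x) '' V) : Set (closure (orbit G x))) =
      (· • (⟨x, subset_closure (mem_orbit_self x)⟩ : closure (orbit G x))) '' V := by
  rw [← Subtype.val_injective.preimage_image ((· • _) '' V), image_image]
  rfl

end OrbitClosure

theorem stmt0 {X G : Type*} [TopologicalSpace X] [PolishSpace X]
    [Group G] [TopologicalSpace G] [PolishSpace G] [IsTopologicalGroup G]
    [MulAction G X] [ContinuousSMul G X] (x : X)
    (h : ∀ V : Set G, IsOpen V → (1 : G) ∈ V →
      ¬ IsNowhereDense ((Subtype.val ⁻¹' ((· • x) '' V)) :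
        Set ↥(closure (MulAction.orbit G x)))) :
    (Subtype.val ⁻¹' (MulAction.orbit G x) :
      Set ↥(closure (MulAction.orbit G x))) ∈
        residual ↥(closure (MulAction.orbit G x)) := by
  have : PolishSpace (closure (orbit G x)) := isClosed_closure.polishSpace
  set y : closure (orbit G x) := ⟨x, subset_closure (mem_orbit_self x)⟩
  have horbit : (Subtype.val ⁻¹' orbit G x : Set (closure (orbit G x))) = orbit G y := by
    have horbit' := preimage_val_image_smul (G := G) x univ
    rwa [image_univ, image_univ] at horbit'
  rw [horbit]
  refine orbit_mem_residual ?_ (analyticSet_range_of_polishSpace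
    (continuous_id.smul continuous_const)).baireMeasurableSet
    (not_isMeagre_orbit fun V hV h1 => preimage_val_image_smul x V ▸ h V hV h1)
  rw [Subtype.dense_iff, ← horbit, image_preimage_eq_inter_range, Subtype.range_val,
    inter_eq_left.2 subset_closure]
end

section
/- Let φ be a lower semi-continuous submeasure on ℕ with I = Exh(φ), and equip S_I with the metric d(f,g) = φ({f ≠ g}). Then the permutations with finite support are dense in (S_I, d). -/
open Filter Topology Set
open scoped ENNReal

theorem stmt13 (φ : Set ℕ → ℝ≥0∞)
    (h0 : φ ∅ = 0)
    (hmono : ∀ A B : Set ℕ, A ⊆ B → φ A ≤ φ B)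
    (hsub : ∀ A B : Set ℕ, φ (A ∪ B) ≤ φ A + φ B)
    (hfin : ∀ n : ℕ, φ {n} < ⊤)
    (hlsc : ∀ A : ℕ → Set ℕ, Monotone A →
      Tendsto (fun m => φ (A m)) atTop (𝓝 (φ (⋃ m, A m)))) :
    ∀ g : Equiv.Perm ℕ,
      Tendsto (fun m => φ ({n | g n ≠ n} \ {k | k ≤ m})) atTop (𝓝 0) →
      ∀ ε : ℝ≥0∞, 0 < ε →
        ∃ f : Equiv.Perm ℕ, {n | f n ≠ n}.Finite ∧
          Tendsto (fun m => φ ({n | f n ≠ n} \ {k | k ≤ m})) atTop (𝓝 0) ∧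
          φ {n | f n ≠ g n} < ε := by
  classical
  intro g hg ε hε
  -- choose m with small tail
  obtain ⟨m, hm⟩ := (hg.eventually (gt_mem_nhds hε)).exists
  set S : Set ℕ := {n | g n ≠ n} with hS
  set A : Set ℕ := S ∩ {k | k ≤ m} with hA
  have hAfin : A.Finite := (Set.finite_Iic m).subset (by intro x hx; exact hx.2)
  set B : Set ℕ := A ∪ g '' A with hB
  have hBfin : B.Finite := hAfin.union (hAfin.image g)
  have hAB : A ⊆ B := subset_union_left
  have hgAB : g '' A ⊆ B := subset_union_right
  have hBS : B ⊆ S := by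
    rintro x (hx | ⟨y, hy, rfl⟩)
    · exact hx.1
    · have : g y ≠ y := hy.1
      simp only [hS, Set.mem_setOf_eq]
      intro h
      exact this (g.injective h)
  -- the equivalence A ≃ g '' A
  let eA : (A : Set ℕ) ≃ (g '' A : Set ℕ) := Equiv.Set.image g A g.injective
  -- the equivalence between complements in B
  haveI : Finite ((B \ A : Set ℕ)) := (hBfin.subset diff_subset).to_subtype
  haveI : Finite ((B \ (g '' A) : Set ℕ)) := (hBfin.subset diff_subset).to_subtype
  have hcard : Nat.card ((B \ A : Set ℕ)) = Nat.card ((B \ (g '' A) : Set ℕ)) := by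
    rw [Nat.card_coe_set_eq, Nat.card_coe_set_eq,
      Set.ncard_diff hAB hAfin, Set.ncard_diff hgAB (hAfin.image g),
      Set.ncard_image_of_injective A g.injective]
  have eC : ((B \ A : Set ℕ)) ≃ ((B \ (g '' A) : Set ℕ)) := (Finite.card_eq.mp hcard).some
  -- the permutation of B
  let σB : Equiv.Perm (B : Set ℕ) :=
    (Equiv.Set.sumDiffSubset hAB).symm.trans
      ((Equiv.sumCongr eA eC).trans (Equiv.Set.sumDiffSubset hgAB))
  let f : Equiv.Perm ℕ := σB.extendDomain (Equiv.refl _)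
  have hf_not : ∀ n : ℕ, n ∉ B → f n = n := by
    intro n hn
    exact Equiv.Perm.extendDomain_apply_not_subtype σB (Equiv.refl _) hn
  have hf_mem : ∀ n : ℕ, (hn : n ∈ B) → f n = (σB ⟨n, hn⟩ : ℕ) := by
    intro n hn
    exact Equiv.Perm.extendDomain_apply_subtype σB (Equiv.refl _) hn
  have hf_A : ∀ n : ℕ, (hn : n ∈ A) → f n = g n := by
    intro n hn
    have hnB : n ∈ B := hAB hn
    rw [hf_mem n hnB]
    have h1 : (Equiv.Set.sumDiffSubset hAB).symm ⟨n, hnB⟩ = Sum.inl ⟨n, hn⟩ :=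
      Equiv.Set.sumDiffSubset_symm_apply_of_mem hAB hn
    simp only [σB, Equiv.trans_apply, h1, Equiv.sumCongr_apply, Sum.map_inl]
    have h2 : eA ⟨n, hn⟩ = ⟨g n, Set.mem_image_of_mem g hn⟩ := rfl
    rw [h2, Equiv.Set.sumDiffSubset_apply_inl]
  have hsuppB : {n | f n ≠ n} ⊆ B := by
    intro n hn
    by_contra hnB
    exact hn (hf_not n hnB)
  have hsupp_fin : {n | f n ≠ n}.Finite := hBfin.subset hsuppB
  refine ⟨f, hsupp_fin, ?_, ?_⟩
  · -- tail of f is eventually empty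
    obtain ⟨M, hM⟩ : ∃ M, ∀ n ∈ B, n ≤ M := by
      rcases hBfin.bddAbove with ⟨M, hM⟩
      exact ⟨M, fun n hn => hM hn⟩
    have hev : ∀ᶠ k in atTop, φ ({n | f n ≠ n} \ {j | j ≤ k}) = 0 := by
      filter_upwards [eventually_ge_atTop M] with k hk
      have : {n | f n ≠ n} \ {j | j ≤ k} = ∅ := by
        apply Set.eq_empty_iff_forall_notMem.mpr
        rintro n ⟨hn1, hn2⟩
        exact hn2 (le_trans (hM n (hsuppB hn1)) hk)
      rw [this, h0]
    exact Tendsto.congr' (hev.mono fun k hk => hk.symm) tendsto_const_nhds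
  · -- φ {f ≠ g} < ε
    have hsub' : {n | f n ≠ g n} ⊆ S \ {k | k ≤ m} := by
      intro n hn
      simp only [Set.mem_setOf_eq] at hn
      by_cases hnA : n ∈ A
      · exact absurd (hf_A n hnA) hn
      by_cases hnB : n ∈ B
      · refine ⟨hBS hnB, ?_⟩
        intro hnm
        exact hnA ⟨hBS hnB, hnm⟩
      · have hfn : f n = n := hf_not n hnB
        have hgn : g n ≠ n := by
          intro h; exact hn (hfn.trans h.symm)
        refine ⟨hgn, ?_⟩
        intro hnm
        exact hnB (hAB ⟨hgn, hnm⟩)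
    exact lt_of_le_of_lt (hmono _ _ hsub') hm
end

section
/- Let I be an ideal on ℕ containing Fin, and let g_0, …, g_n ∈ S_I have supports contained in an infinite set A ∈ I, such that for every m, every finite B₀ ⊆ ℕ, and all f_0, …, f_n ∈ Sym(B₀) there exist A₀ ⊆ A with min A₀ > m and a bijection h : A₀ → B₀ with h g_i h⁻¹(b) = f_i(b) for all b ∈ B₀ and i ≤ n. Then for any finitely supported f_0, …, f_n ∈ Sym(ℕ) and any m greater than max(⋃_i supp(f_i)), there exists a finitely supported permutation h_m with supp(h_m) ⊆ A ∪ ⋃_i supp(f_i) such that (h_m g_i h_m⁻¹)(k) = f_i(k) for all k ≤ m and i ≤ n, provided additionally that [0,m] can be chosen invariant under each g_i and each f_i agrees with g_i on [0,m'] for a suitable m' ≤ m. -/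
open Set

theorem stmt19 (I : Set (Set ℕ))
    (hempty : ∅ ∈ I)
    (hdown : ∀ A B : Set ℕ, B ∈ I → A ⊆ B → A ∈ I)
    (hunion : ∀ A B : Set ℕ, A ∈ I → B ∈ I → A ∪ B ∈ I)
    (hFin : ∀ A : Set ℕ, A.Finite → A ∈ I)
    (n : ℕ) (g : Fin (n + 1) → Equiv.Perm ℕ)
    (A : Set ℕ) (hA : A ∈ I) (hAinf : A.Infinite)
    (hgI : ∀ i, {k | g i k ≠ k} ∈ I)
    (hgsupp : ∀ i, {k | g i k ≠ k} ⊆ A)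
    (hhom : ∀ m : ℕ, ∀ B₀ : Set ℕ, B₀.Finite →
      ∀ f : Fin (n + 1) → Equiv.Perm ℕ, (∀ i, {k | f i k ≠ k} ⊆ B₀) →
        ∃ A₀ : Set ℕ, A₀ ⊆ A ∧ (∀ a ∈ A₀, m < a) ∧
          ∃ h : ℕ → ℕ, Set.BijOn h A₀ B₀ ∧
            ∀ i, ∀ a ∈ A₀, g i a ∈ A₀ ∧ h (g i a) = f i (h a))
    (f : Fin (n + 1) → Equiv.Perm ℕ)
    (hffin : ∀ i, {k | f i k ≠ k}.Finite)
    (m : ℕ) (hm : ∀ i, ∀ k, f i k ≠ k → k < m)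
    (hinv : ∀ i, (⇑(g i)) '' {k | k ≤ m} = {k | k ≤ m})
    (hagree : ∃ m' ≤ m, ∀ i, ∀ k ≤ m', f i k = g i k) :
    ∃ hₘ : Equiv.Perm ℕ, {k | hₘ k ≠ k}.Finite ∧
      {k | hₘ k ≠ k} ⊆ A ∪ ⋃ i, {k | f i k ≠ k} ∧
      ∀ i, ∀ k ≤ m, (hₘ * g i * hₘ⁻¹) k = f i k := by

  classical
  set B : Set ℕ := ⋃ i, {k | f i k ≠ k} with hB
  set B' : Set ℕ := (A ∪ B) ∩ {k | k ≤ m} with hB'def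
  have hB'fin : B'.Finite := (Set.finite_Iic m).subset (fun k hk => hk.2)
  have hfB' : ∀ i, {k | f i k ≠ k} ⊆ B' := by
    intro i k hk
    exact ⟨Or.inr (Set.mem_iUnion.2 ⟨i, hk⟩), (hm i k hk).le⟩
  obtain ⟨A₀, hA₀A, hA₀m, h, hb, hcomm⟩ := hhom m B' hB'fin f hfB'
  have hdisj : ∀ k, k ∈ A₀ → k ∉ B' := fun k hk hk' =>
    absurd hk'.2 (not_le.2 (hA₀m k hk))
  set h' := Function.invFunOn h A₀ with hh'
  have hinvOn : Set.InvOn h' h A₀ B' := hb.invOn_invFunOn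
  have hbsymm : Set.BijOn h' B' A₀ := hb.symm hinvOn.symm
  have hA₀fin : A₀.Finite := by
    rw [← hbsymm.image_eq]; exact hB'fin.image _
  set F : ℕ → ℕ := fun k => if k ∈ A₀ then h k else if k ∈ B' then h' k else k with hF
  have hinvol : Function.Involutive F := by
    intro k
    by_cases hk : k ∈ A₀
    · have hhk : h k ∈ B' := hb.mapsTo hk
      have hhkA : h k ∉ A₀ := fun hc => hdisj _ hc hhk
      simp only [hF, if_pos hk, if_neg hhkA, if_pos hhk]
      exact hinvOn.1 hk
    · by_cases hk' : k ∈ B'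
      · have h2 : h' k ∈ A₀ := hbsymm.mapsTo hk'
        simp only [hF, if_neg hk, if_pos hk', if_pos h2]
        exact hinvOn.2 hk'
      · simp only [hF, if_neg hk, if_neg hk']
  refine ⟨Function.Involutive.toPerm F hinvol, ?_, ?_, ?_⟩
  · apply (hA₀fin.union hB'fin).subset
    intro k hk
    simp only [Set.mem_setOf_eq, Function.Involutive.coe_toPerm] at hk
    by_contra hc
    rw [Set.mem_union] at hc
    push_neg at hc
    exact hk (by simp only [hF, if_neg hc.1, if_neg hc.2])
  · intro k hk
    simp only [Set.mem_setOf_eq, Function.Involutive.coe_toPerm] at hk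
    by_cases hk1 : k ∈ A₀
    · exact Or.inl (hA₀A hk1)
    · by_cases hk2 : k ∈ B'
      · rcases hk2.1 with h1 | h1
        · exact Or.inl h1
        · exact Or.inr h1
      · exact absurd (by simp only [hF, if_neg hk1, if_neg hk2]) hk
  · intro i k hk
    have hFeq : ∀ x, Function.Involutive.toPerm F hinvol x = F x := fun _ => rfl
    have hFinv : ∀ x, (Function.Involutive.toPerm F hinvol)⁻¹ x = F x := fun _ => rfl
    simp only [Equiv.Perm.coe_mul, Function.comp_apply, hFeq, hFinv]
    by_cases hk' : k ∈ B'
    · have h1 : k ∉ A₀ := fun hc => hdisj _ hc hk'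
      have h2 : F k = h' k := by simp only [hF, if_neg h1, if_pos hk']
      have h3 : h' k ∈ A₀ := hbsymm.mapsTo hk'
      obtain ⟨h4, h5⟩ := hcomm i (h' k) h3
      rw [h2]
      have h6 : F (g i (h' k)) = h (g i (h' k)) := by simp only [hF, if_pos h4]
      rw [h6, h5, hinvOn.2 hk']
    · have hkA : k ∉ A := fun hc => hk' ⟨Or.inl hc, hk⟩
      have hkA₀ : k ∉ A₀ := fun hc => absurd hk (not_le.2 (hA₀m k hc))
      have h1 : F k = k := by simp only [hF, if_neg hkA₀, if_neg hk']
      have h2 : g i k = k := by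
        by_contra hc
        exact hkA (hgsupp i hc)
      have hfk : f i k = k := by
        by_contra hc
        exact hk' (hfB' i hc)
      rw [h1, h2, h1, hfk]
end
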